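/- arXiv:1606.06721 — 7 statements merged into one kernel-verified Lean document; each statement's English description precedes it below -/
import Mathlib

section
/- In the summing norm ‖a‖ = sup_{M≥1}|∑_{n=1}^M a_n|, the sequence a = (−1, 2, −2, 2, −2, …, 2, −2, 0, 0, …) with N pairs (2, −2) has ‖a‖ = 1, while the sequence obtained by keeping only the entries equal to 2 (and setting all other entries to 0) has norm 2N. Hence the coordinate projection onto a set of N indices can increase the summing norm by a factor 2N. -/
/-- In the summing norm, the sequence `a = (-1, 2, -2, 2, -2, …, 2, -2, 0, …)` with `N`
pairs `(2,-2)` has norm `1`, while the sequence `b` keeping only the entries equal to `2`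
has norm `2N`. -/
theorem stmt_5 (N : ℕ) (hN : 1 ≤ N) (a b : ℕ → ℝ)
    (ha0 : a 0 = 0) (ha1 : a 1 = -1)
    (ha2 : ∀ k, 1 ≤ k → k ≤ N → a (2 * k) = 2 ∧ a (2 * k + 1) = -2)
    (ha3 : ∀ n, 2 * N + 1 < n → a n = 0)
    (hb : ∀ n, b n = if a n = 2 then 2 else 0) :
    (⨆ M : ℕ, |∑ n ∈ Finset.range M, a n|) = 1 ∧
    (⨆ M : ℕ, |∑ n ∈ Finset.range M, b n|) = 2 * N := by
  -- value of a at n ≥ 2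
  have haM : ∀ M : ℕ, 2 ≤ M → a M =
      if M % 2 = 0 then (if M ≤ 2 * N then 2 else 0)
      else (if M ≤ 2 * N + 1 then -2 else 0) := by
    intro M hM
    rcases Nat.even_or_odd M with ⟨k, hk⟩ | ⟨k, hk⟩
    · have hk2 : M = 2 * k := by omega
      subst hk2
      have hk1 : 1 ≤ k := by omega
      by_cases h : k ≤ N
      · rw [(ha2 k hk1 h).1]
        simp [Nat.mul_mod_right, show 2 * k ≤ 2 * N by omega]
      · rw [ha3 _ (by omega)]
        simp [Nat.mul_mod_right, show ¬ (2 * k ≤ 2 * N) by omega]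
    · subst hk
      have hk1 : 1 ≤ k := by omega
      by_cases h : k ≤ N
      · rw [(ha2 k hk1 h).2]
        simp [show (2 * k + 1) % 2 = 1 by omega,
          show 2 * k + 1 ≤ 2 * N + 1 by omega]
      · rw [ha3 _ (by omega)]
        simp [show (2 * k + 1) % 2 = 1 by omega, show ¬ (2 * k + 1 ≤ 2 * N + 1) by omega]
  -- partial sums of a
  have hf : ∀ M : ℕ, ∑ n ∈ Finset.range M, a n =
      if M ≤ 1 then 0 else if M % 2 = 1 ∧ M ≤ 2 * N + 1 then 1 else -1 := by
    intro M
    induction M with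
    | zero => simp
    | succ M ih =>
      rw [Finset.sum_range_succ, ih]
      rcases Nat.lt_or_ge M 2 with h2 | h2
      · interval_cases M <;> simp [ha0, ha1] <;> omega
      · rw [haM M h2]
        have h1 : ¬ (M ≤ 1) := by omega
        have h1' : ¬ (M + 1 ≤ 1) := by omega
        rcases Nat.even_or_odd M with ⟨k, hk⟩ | ⟨k, hk⟩
        · -- M even: partial sum was -1
          have hm0 : M % 2 = 0 := by omega
          have hm1 : ¬ (M % 2 = 1 ∧ M ≤ 2 * N + 1) := by omega
          by_cases h : M ≤ 2 * N
          · rw [if_neg h1, if_neg hm1, if_pos hm0, if_pos h, if_neg h1',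
              if_pos (show (M + 1) % 2 = 1 ∧ M + 1 ≤ 2 * N + 1 by omega)]
            norm_num
          · rw [if_neg h1, if_neg hm1, if_pos hm0, if_neg h, if_neg h1',
              if_neg (show ¬ ((M + 1) % 2 = 1 ∧ M + 1 ≤ 2 * N + 1) by omega)]
            norm_num
        · -- M odd
          have hm0 : ¬ (M % 2 = 0) := by omega
          have hy : ¬ ((M + 1) % 2 = 1 ∧ M + 1 ≤ 2 * N + 1) := by omega
          by_cases h : M ≤ 2 * N + 1
          · rw [if_neg h1, if_pos (show M % 2 = 1 ∧ M ≤ 2 * N + 1 by omega),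
              if_neg hm0, if_pos h, if_neg h1', if_neg hy]
            norm_num
          · rw [if_neg h1, if_neg (show ¬ (M % 2 = 1 ∧ M ≤ 2 * N + 1) by omega),
              if_neg hm0, if_neg h, if_neg h1', if_neg hy]
            norm_num
  -- values of b
  have hbM : ∀ M : ℕ, b M = if (M % 2 = 0 ∧ 2 ≤ M ∧ M ≤ 2 * N) then 2 else 0 := by
    intro M
    rw [hb M]
    rcases Nat.lt_or_ge M 2 with h2 | h2
    · interval_cases M <;> simp [ha0, ha1] <;> norm_num
    · rw [haM M h2]
      rcases Nat.even_or_odd M with ⟨k, hk⟩ | ⟨k, hk⟩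
      · have hm0 : M % 2 = 0 := by omega
        by_cases h : M ≤ 2 * N <;> simp [hm0, h, h2]
      · have hm0 : M % 2 = 1 := by omega
        simp [hm0]
        split_ifs <;> norm_num
  -- partial sums of b
  have hg : ∀ M : ℕ, ∑ n ∈ Finset.range M, b n = 2 * ((min N ((M - 1) / 2) : ℕ) : ℝ) := by
    intro M
    induction M with
    | zero => simp
    | succ M ih =>
      rw [Finset.sum_range_succ, ih, hbM M]
      by_cases h : M % 2 = 0 ∧ 2 ≤ M ∧ M ≤ 2 * N
      · rw [if_pos h, show min N ((M + 1 - 1) / 2) = min N ((M - 1) / 2) + 1 by omega]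
        push_cast
        ring
      · rw [if_neg h, show min N ((M + 1 - 1) / 2) = min N ((M - 1) / 2) by omega]
        ring
  constructor
  · apply le_antisymm
    · apply ciSup_le
      intro M
      rw [hf M]
      split_ifs <;> norm_num
    · have hb1 : BddAbove (Set.range fun M : ℕ => |∑ n ∈ Finset.range M, a n|) := by
        refine ⟨1, ?_⟩
        rintro x ⟨M, rfl⟩
        show |∑ n ∈ Finset.range M, a n| ≤ 1
        rw [hf M]
        split_ifs <;> norm_num
      have := le_ciSup hb1 2
      simpa [hf 2] using this
  · apply le_antisymm
    · apply ciSup_le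
      intro M
      rw [hg M, abs_of_nonneg (by positivity)]
      have h1 : ((min N ((M - 1) / 2) : ℕ) : ℝ) ≤ (N : ℝ) := by
        exact_mod_cast min_le_left _ _
      linarith
    · have hb2 : BddAbove (Set.range fun M : ℕ => |∑ n ∈ Finset.range M, b n|) := by
        refine ⟨2 * N, ?_⟩
        rintro x ⟨M, rfl⟩
        show |∑ n ∈ Finset.range M, b n| ≤ 2 * N
        rw [hg M, abs_of_nonneg (by positivity)]
        have h1 : ((min N ((M - 1) / 2) : ℕ) : ℝ) ≤ (N : ℝ) := by
          exact_mod_cast min_le_left _ _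
        linarith
      calc (2 * N : ℝ) = |∑ n ∈ Finset.range (2 * N + 1), b n| := by
            rw [hg, show min N ((2 * N + 1 - 1) / 2) = N by omega,
              abs_of_nonneg (by positivity)]
        _ ≤ _ := le_ciSup hb2 (2 * N + 1)
end

section
/- In ℓ¹ ⊕ ℓ^q with 1 ≤ q < ∞ (norm ‖(x,y)‖ = ‖x‖₁ + ‖y‖_q), for any real t ≥ 0 and integer N ≥ 1, the function t ↦ (t + N)/(t^q + N)^{1/q} on [0,∞) attains its maximum at t = 1, with maximum value (N+1)^{1−1/q}. -/
/-- For `q ≥ 1` and an integer `N ≥ 1`, the function `t ↦ (t + N)/(t^q + N)^{1/q}` on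
`[0,∞)` is bounded by its value at `t = 1`, which equals `(N+1)^{1 - 1/q}`. -/
theorem stmt_8 (q : ℝ) (hq : 1 ≤ q) (N : ℕ) (hN : 1 ≤ N) (t : ℝ) (ht : 0 ≤ t) :
    (t + N) / (t ^ q + N) ^ (1 / q : ℝ) ≤ ((N : ℝ) + 1) ^ (1 - 1 / q : ℝ) ∧
    ((1 : ℝ) + N) / ((1 : ℝ) ^ q + N) ^ (1 / q : ℝ) = ((N : ℝ) + 1) ^ (1 - 1 / q : ℝ) := by
  have hq0 : 0 < q := lt_of_lt_of_le one_pos hq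
  have hNr : (1 : ℝ) ≤ (N : ℝ) := by exact_mod_cast hN
  have hN1 : (0 : ℝ) < (N : ℝ) + 1 := by linarith
  have htq : (0 : ℝ) ≤ t ^ q := Real.rpow_nonneg ht q
  have hA : (0 : ℝ) < t ^ q + (N : ℝ) := by linarith
  have hAq : (0 : ℝ) < (t ^ q + (N : ℝ)) ^ (1 / q : ℝ) := Real.rpow_pos_of_pos hA _
  have hN1q : (0 : ℝ) < ((N : ℝ) + 1) ^ (1 / q : ℝ) := Real.rpow_pos_of_pos hN1 _
  have hsub : ((N : ℝ) + 1) ^ (1 - 1 / q : ℝ)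
      = ((N : ℝ) + 1) / ((N : ℝ) + 1) ^ (1 / q : ℝ) := by
    rw [Real.rpow_sub hN1, Real.rpow_one]
  constructor
  · -- convexity step
    have hconv := convexOn_rpow hq
    have ha : (0 : ℝ) ≤ 1 / ((N : ℝ) + 1) := by positivity
    have hb : (0 : ℝ) ≤ (N : ℝ) / ((N : ℝ) + 1) := by positivity
    have hab : 1 / ((N : ℝ) + 1) + (N : ℝ) / ((N : ℝ) + 1) = 1 := by field_simp; ring
    have key := hconv.2 (Set.mem_Ici.2 ht) (Set.mem_Ici.2 (zero_le_one)) ha hb hab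
    simp only [smul_eq_mul, mul_one, Real.one_rpow] at key
    have hx : 1 / ((N : ℝ) + 1) * t + (N : ℝ) / ((N : ℝ) + 1) = (t + N) / ((N : ℝ) + 1) := by
      field_simp
    have hy : 1 / ((N : ℝ) + 1) * t ^ q + (N : ℝ) / ((N : ℝ) + 1)
        = (t ^ q + N) / ((N : ℝ) + 1) := by
      field_simp
    rw [hx, hy] at key
    -- key : ((t+N)/(N+1))^q ≤ (t^q+N)/(N+1)
    have hxy0 : (0 : ℝ) ≤ (t + N) / ((N : ℝ) + 1) := by positivity
    have step : (t + N) / ((N : ℝ) + 1) ≤ ((t ^ q + N) / ((N : ℝ) + 1)) ^ (1 / q : ℝ) := by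
      have h1 : (((t + N) / ((N : ℝ) + 1)) ^ q) ^ (1 / q : ℝ)
          ≤ ((t ^ q + N) / ((N : ℝ) + 1)) ^ (1 / q : ℝ) :=
        Real.rpow_le_rpow (Real.rpow_nonneg hxy0 q) key (by positivity)
      rwa [← Real.rpow_mul hxy0, mul_one_div, div_self (ne_of_gt hq0),
        Real.rpow_one] at h1
    rw [Real.div_rpow (le_of_lt hA) (le_of_lt hN1)] at step
    rw [hsub, div_le_div_iff₀ hAq hN1q]
    have step' := (div_le_iff₀ hN1).mp step
    have step'' := mul_le_mul_of_nonneg_right step' hN1q.le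
    calc (t + N) * ((N : ℝ) + 1) ^ (1 / q : ℝ)
        ≤ (t ^ q + N) ^ (1 / q : ℝ) / ((N : ℝ) + 1) ^ (1 / q : ℝ) * ((N : ℝ) + 1)
            * ((N : ℝ) + 1) ^ (1 / q : ℝ) := step''
      _ = ((N : ℝ) + 1) * (t ^ q + N) ^ (1 / q : ℝ) := by
          field_simp
  · rw [Real.one_rpow, hsub, add_comm (1 : ℝ) (N : ℝ)]
end

section
/- Let (e_n, e_n^*) be a biorthogonal system in a Banach space X and x ∈ X with finitely many nonzero coefficients outside a finite set. For α > 0, define the truncation T_α x = ∑_n T_α(e_n^*(x)) e_n where T_α(z) = α·sgn(z) if |z| ≥ α and T_α(z) = z otherwise. Then T_α x = ∫_0^1 (I − P_{Λ_{α,s}}) x ds, where Λ_{α,s} = {n : |e_n^*(x)| > α/s} and P_Λ x = ∑_{n∈Λ} e_n^*(x) e_n. -/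
/-!
Coefficientwise: for `s ∈ (0, 1]` the `n`-th term `a_n e_n` (with `a_n = e_n^*(x)`) is removed
from the integrand exactly when `s > α / |a_n|`, so integrating over `s` removes the fraction
`1 - α / |a_n|` of it when `|a_n| > α`, and `a_n - (1 - α / |a_n|) a_n = α sgn(a_n)`.
-/

open MeasureTheory Set

theorem one_sub_div_abs_mul_self (α a : ℝ) : (1 - α / |a|) * a = a - α * Real.sign a := by
  rcases lt_trichotomy a 0 with ha | rfl | ha
  · rw [Real.sign_of_neg ha, abs_of_neg ha]
    field_simp [ha.ne]
  · simp
  · rw [Real.sign_of_pos ha, abs_of_pos ha]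
    field_simp

theorem integrableOn_ite_div_lt {E : Type*} [NormedAddCommGroup E] {μ : Measure ℝ} {t : Set ℝ}
    (ht : μ t ≠ ⊤) (α c : ℝ) (v : E) :
    IntegrableOn (fun s : ℝ => if α / s < c then v else 0) t μ :=
  (integrableOn_const (C := v) ht).indicator
    (measurableSet_lt (measurable_const.div measurable_id) measurable_const :
      MeasurableSet {s : ℝ | α / s < c})

theorem setIntegral_Ioc_ite_div_lt {E : Type*} [NormedAddCommGroup E] [NormedSpace ℝ E]
    [CompleteSpace E] {α c : ℝ} (hα : 0 < α) (v : E) :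
    ∫ s in Ioc (0 : ℝ) 1, (if α / s < c then v else 0)
      = if α < c then (1 - α / c) • v else 0 := by
  split_ifs with hc
  · have hc0 : 0 < c := hα.trans hc
    have hind : EqOn (fun s => if α / s < c then v else 0) ((Ioi (α / c)).indicator fun _ => v)
        (Ioc 0 1) := fun s hs => by
      simp only [indicator, mem_Ioi, div_lt_comm₀ hs.1 hc0]
    rw [setIntegral_congr_fun measurableSet_Ioc hind, setIntegral_indicator measurableSet_Ioi,
      Ioc_inter_Ioi, max_eq_right (div_pos hα hc0).le, setIntegral_const,
      Real.volume_real_Ioc_of_le ((div_lt_one hc0).mpr hc).le]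
  · refine setIntegral_eq_zero_of_forall_eq_zero fun s hs => if_neg ?_
    exact ((le_of_not_gt hc).trans (le_div_self hα.le hs.1 hs.2)).not_gt

theorem stmt_10_general {X : Type*} [NormedAddCommGroup X] [NormedSpace ℝ X] [CompleteSpace X]
    (e : ℕ → X) (f : ℕ → X →L[ℝ] ℝ)
    (x : X) (S : Finset ℕ)
    (α : ℝ) (hα : 0 < α) :
    (∑ n ∈ S.filter fun n => α < |f n x|, (α * Real.sign (f n x)) • e n)
        + (x - ∑ n ∈ S.filter fun n => α < |f n x|, f n x • e n)
      = ∫ s in Set.Ioc (0 : ℝ) 1,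
          (x - ∑ n ∈ S.filter fun n => α / s < |f n x|, f n x • e n) := by
  have hint : ∀ n ∈ S, IntegrableOn (fun s : ℝ => if α / s < |f n x| then f n x • e n else 0)
      (Ioc 0 1) := fun n _ => integrableOn_ite_div_lt measure_Ioc_lt_top.ne _ _ _
  simp_rw [Finset.sum_filter]
  rw [integral_sub (integrable_const x) (integrable_finsetSum _ hint), integral_finsetSum _ hint,
    setIntegral_const, Real.volume_real_Ioc_of_le zero_le_one, sub_zero, one_smul]
  simp_rw [setIntegral_Ioc_ite_div_lt hα, smul_smul, one_sub_div_abs_mul_self, sub_smul,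
    ← Finset.sum_filter, Finset.sum_sub_distrib]
  abel

/-- Integral representation of the truncation operator: for a biorthogonal system, a
vector `x` with finitely supported coefficients and `α > 0`,
`T_α x = ∫_0^1 (I - P_{Λ_{α,s}}) x ds`, where `Λ_{α,s} = {n : |e_n^*(x)| > α/s}` and
`T_α x = ∑_{|e_n^*(x)|>α} α sgn(e_n^*(x)) e_n + (I - P_{Λ_α}) x`. -/
theorem stmt_10 {X : Type*} [NormedAddCommGroup X] [NormedSpace ℝ X] [CompleteSpace X]
    (e : ℕ → X) (f : ℕ → X →L[ℝ] ℝ)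
    (hbi : ∀ m n, f m (e n) = if m = n then 1 else 0)
    (x : X) (S : Finset ℕ) (hS : ∀ n ∉ S, f n x = 0)
    (α : ℝ) (hα : 0 < α) :
    (∑ n ∈ S.filter fun n => α < |f n x|, (α * Real.sign (f n x)) • e n)
        + (x - ∑ n ∈ S.filter fun n => α < |f n x|, f n x • e n)
      = ∫ s in Set.Ioc (0 : ℝ) 1,
          (x - ∑ n ∈ S.filter fun n => α / s < |f n x|, f n x • e n) :=
  stmt_10_general e f x S α hα
end

section
/- Let X be a Banach space with a biorthogonal system such that ‖e_m‖·‖e_n^*‖ ≤ K̃ for all m,n. Then for any x ∈ X, any finite set Γ that is a greedy set for x with |Γ| = N, any z with |supp z| ≤ N and any A ⊇ supp z with |A| = N, one has ‖P_{A∖Γ} x‖ ≤ K̃·N·‖x − z‖. -/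
/-- Theorem 1 of the paper (key step): if `‖e_m‖·‖e_n^*‖ ≤ K̃` for all `m, n`, then for
any `x`, any greedy set `Γ` of `x` with `|Γ| = N`, any `z` and any `A ⊇ supp z` with
`|A| = N`, one has `‖P_{A∖Γ} x‖ ≤ K̃·N·‖x - z‖`. -/
theorem stmt_14 {X : Type*} [NormedAddCommGroup X] [NormedSpace ℝ X] [CompleteSpace X]
    (e : ℕ → X) (f : ℕ → X →L[ℝ] ℝ)
    (hbi : ∀ m n, f m (e n) = if m = n then 1 else 0)
    (Kt : ℝ) (hK : ∀ m n, ‖e m‖ * ‖f n‖ ≤ Kt)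
    (x : X) (N : ℕ) (Γ : Finset ℕ) (hΓcard : Γ.card = N)
    (hΓ : ∀ n ∈ Γ, ∀ m ∉ Γ, |f m x| ≤ |f n x|)
    (z : X) (A : Finset ℕ) (hAcard : A.card = N) (hz : ∀ n ∉ A, f n z = 0) :
    ‖∑ n ∈ A \ Γ, f n x • e n‖ ≤ Kt * N * ‖x - z‖ := by
  have hKt0 : 0 ≤ Kt := le_trans (mul_nonneg (norm_nonneg _) (norm_nonneg _)) (hK 0 0)
  by_cases h : (Γ \ A).Nonempty
  · obtain ⟨m, hm⟩ := h
    rw [Finset.mem_sdiff] at hm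
    have hfm : f m x = f m (x - z) := by
      rw [map_sub, hz m hm.2, sub_zero]
    calc ‖∑ n ∈ A \ Γ, f n x • e n‖ ≤ ∑ n ∈ A \ Γ, ‖f n x • e n‖ := norm_sum_le _ _
      _ ≤ ∑ _n ∈ A \ Γ, Kt * ‖x - z‖ := by
          apply Finset.sum_le_sum
          intro n hn
          rw [Finset.mem_sdiff] at hn
          rw [norm_smul, Real.norm_eq_abs]
          have h1 : |f n x| ≤ |f m x| := hΓ m hm.1 n hn.2
          have h2 : |f m x| ≤ ‖f m‖ * ‖x - z‖ := by
            rw [hfm]; exact (f m).le_opNorm _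
          calc |f n x| * ‖e n‖ ≤ (‖f m‖ * ‖x - z‖) * ‖e n‖ := by
                exact mul_le_mul_of_nonneg_right (h1.trans h2) (norm_nonneg _)
            _ = (‖e n‖ * ‖f m‖) * ‖x - z‖ := by ring
            _ ≤ Kt * ‖x - z‖ :=
                mul_le_mul_of_nonneg_right (hK n m) (norm_nonneg _)
      _ = (A \ Γ).card * (Kt * ‖x - z‖) := by
          rw [Finset.sum_const, nsmul_eq_mul]
      _ ≤ N * (Kt * ‖x - z‖) := by
          apply mul_le_mul_of_nonneg_right _ (mul_nonneg hKt0 (norm_nonneg _))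
          exact_mod_cast hAcard ▸ Finset.card_le_card (Finset.sdiff_subset)
      _ = Kt * N * ‖x - z‖ := by ring
  · have hsub : Γ ⊆ A := by
      rw [Finset.not_nonempty_iff_eq_empty, Finset.sdiff_eq_empty_iff_subset] at h
      exact h
    have : A = Γ := (Finset.eq_of_subset_of_card_le hsub (by rw [hΓcard, hAcard])).symm
    rw [this, Finset.sdiff_self, Finset.sum_empty, norm_zero]
    positivity
end

section
/- Let x be an element of a Banach space with biorthogonal system, Γ a greedy set for x of size N, z an element with support contained in a set A of size N. Then max_{m∈A∖Γ}|e_m^*(x)| ≤ min_{n∈Γ̃}|e_n^*(x − z)| for any greedy set Γ̃ of x − z with |Γ̃| = |A∖Γ|. -/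
/-- The key comparison (inequality (3.2) of the paper): if `Γ` is a greedy set for `x`
of size `N`, `z` is supported in a set `A` of size `N`, and `Γ̃` is a greedy set for
`x - z` with `|Γ̃| = |A ∖ Γ|`, then
`max_{m ∈ A∖Γ} |e_m^*(x)| ≤ min_{n ∈ Γ̃} |e_n^*(x - z)|`. -/
theorem stmt_15 {X : Type*} [NormedAddCommGroup X] [NormedSpace ℝ X] [CompleteSpace X]
    (e : ℕ → X) (f : ℕ → X →L[ℝ] ℝ)
    (hbi : ∀ m n, f m (e n) = if m = n then 1 else 0)
    (x z : X) (N : ℕ) (Γ A Γt : Finset ℕ)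
    (hΓcard : Γ.card = N)
    (hΓ : ∀ n ∈ Γ, ∀ m ∉ Γ, |f m x| ≤ |f n x|)
    (hAcard : A.card = N) (hz : ∀ n ∉ A, f n z = 0)
    (hΓtcard : Γt.card = (A \ Γ).card)
    (hΓt : ∀ n ∈ Γt, ∀ m ∉ Γt, |f m (x - z)| ≤ |f n (x - z)|) :
    ∀ m ∈ A \ Γ, ∀ n ∈ Γt, |f m x| ≤ |f n (x - z)| := by
  intro m hm n hn
  obtain ⟨hmA, hmΓ⟩ := Finset.mem_sdiff.mp hm
  have hcards : (Γ \ A).card = Γt.card := by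
    rw [hΓtcard, Finset.card_sdiff_comm (hΓcard.trans hAcard.symm)]
  have key : ∀ k ∈ Γ \ A, |f m x| ≤ |f k (x - z)| := by
    intro k hk
    obtain ⟨hkΓ, hkA⟩ := Finset.mem_sdiff.mp hk
    have : f k (x - z) = f k x := by
      simp [hz k hkA]
    rw [this]
    exact hΓ k hkΓ m hmΓ
  by_cases hsub : Γ \ A ⊆ Γt
  · have heq : Γ \ A = Γt := Finset.eq_of_subset_of_card_le hsub hcards.ge
    exact key n (heq ▸ hn)
  · obtain ⟨k, hkΓA, hkΓt⟩ := Finset.not_subset.mp hsub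
    exact (key k hkΓA).trans (hΓt n hn k hkΓt)
end

section
/- (Abel/greedy truncation bound) Let X be a Banach space with biorthogonal system, x ∈ X, Λ a greedy set for x with |Λ| = N, α = min_{n∈Λ}|e_n^*(x)|, and ε_n = sgn(e_n^*(x)). Suppose for all greedy sets Γ' ⊆ Γ of x with |Γ| ≤ N one has ‖P_Γ x − P_{Γ'} x‖ ≤ C‖x‖. Then α·‖∑_{n∈Λ} ε_n e_n‖ ≤ C‖x‖. -/
/-- Auxiliary Abel-summation lemma: for a greedy set `Λ` and `0 ≤ β ≤ |f n x|` on `Λ`,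
the vector `∑_{n∈Λ} (β ε_n) e_n` is a nonnegative combination of differences
`P_Λ x - P_Γ x` over greedy subsets `Γ ⊆ Λ`, with total mass at most `β/γ` for any
positive lower bound `γ` of `|f n x|` on `Λ`. -/
theorem stmt_18_aux {X : Type*} [NormedAddCommGroup X] [NormedSpace ℝ X]
    (e : ℕ → X) (f : ℕ → X →L[ℝ] ℝ) (x : X) (ε : ℕ → ℝ) :
    ∀ Λ : Finset ℕ, (∀ n ∈ Λ, ∀ m ∉ Λ, |f m x| ≤ |f n x|) →
    ∀ β : ℝ, 0 ≤ β → (∀ n ∈ Λ, β ≤ |f n x|) → (∀ n ∈ Λ, ε n * |f n x| = f n x) →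
    ∃ d : Finset ℕ → ℝ, (∀ Γ, 0 ≤ d Γ) ∧
      (∀ γ : ℝ, 0 < γ → (∀ n ∈ Λ, γ ≤ |f n x|) → ∑ Γ ∈ Λ.powerset, d Γ ≤ β / γ) ∧
      (∀ Γ ∈ Λ.powerset, d Γ ≠ 0 → ∀ n ∈ Γ, ∀ m ∉ Γ, |f m x| ≤ |f n x|) ∧
      ∑ n ∈ Λ, (β * ε n) • e n
        = ∑ Γ ∈ Λ.powerset, d Γ • ((∑ n ∈ Λ, f n x • e n) - ∑ n ∈ Γ, f n x • e n) := by
  intro Λ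
  induction Λ using Finset.strongInduction with
  | _ Λ ih =>
    intro hg β hβ hβle hεp
    rcases Λ.eq_empty_or_nonempty with rfl | hne
    · refine ⟨0, fun _ => le_refl 0, fun γ hγ _ => ?_, by simp, by simp⟩
      simp [le_div_iff₀ hγ, hβ]
    rcases eq_or_lt_of_le hβ with hβ0 | hβpos
    · refine ⟨0, fun _ => le_refl 0, fun γ hγ _ => ?_, by simp, by simp [← hβ0]⟩
      simp [le_div_iff₀ hγ, hβ]
    obtain ⟨m, hm, hmin⟩ := Λ.exists_min_image (fun n => |f n x|) hne
    set Λ' := Λ.erase m with hΛ'def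
    have hΛ'ss : Λ' ⊂ Λ := Finset.erase_ssubset hm
    have hΛ'sub : Λ' ⊆ Λ := hΛ'ss.subset
    have ha : (0:ℝ) < |f m x| := lt_of_lt_of_le hβpos (hβle m hm)
    -- Λ' is greedy
    have hg' : ∀ n ∈ Λ', ∀ k ∉ Λ', |f k x| ≤ |f n x| := by
      intro n hn k hk
      by_cases hkΛ : k ∈ Λ
      · have hkm : k = m := by
          by_contra hkm
          exact hk (Finset.mem_erase.mpr ⟨hkm, hkΛ⟩)
        subst hkm
        exact hmin n (hΛ'sub hn)
      · exact hg n (hΛ'sub hn) k hkΛ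
    obtain ⟨d', hd'0, hd'sum, hd'g, hd'eq⟩ :=
      ih Λ' hΛ'ss hg' β hβ (fun n hn => hβle n (hΛ'sub hn)) (fun n hn => hεp n (hΛ'sub hn))
    set S' : ℝ := ∑ Γ ∈ Λ'.powerset, d' Γ with hS'def
    have hS'le : S' ≤ β / |f m x| :=
      hd'sum (|f m x|) ha (fun n hn => hmin n (hΛ'sub hn))
    have hS'0 : 0 ≤ S' := Finset.sum_nonneg fun Γ _ => hd'0 Γ
    set c : ℝ := β / |f m x| - S' with hcdef
    have hc : 0 ≤ c := sub_nonneg.mpr hS'le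
    refine ⟨fun Γ => (if Γ = Λ' then c else 0) + (if Γ ⊆ Λ' then d' Γ else 0),
      ?_, ?_, ?_, ?_⟩
    · intro Γ
      have h1 : (0:ℝ) ≤ if Γ = Λ' then c else 0 := by positivity
      have h2 : (0:ℝ) ≤ if Γ ⊆ Λ' then d' Γ else 0 := by
        split <;> [exact hd'0 Γ; exact le_refl 0]
      exact add_nonneg h1 h2
    all_goals
      have hfilter : Λ.powerset.filter (fun Γ => Γ ⊆ Λ') = Λ'.powerset := by
        ext Γ
        simp only [Finset.mem_filter, Finset.mem_powerset]
        exact ⟨fun h => h.2, fun h => ⟨h.trans hΛ'sub, h⟩⟩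
    · intro γ hγ hγle
      rw [Finset.sum_add_distrib]
      have e1 : ∑ Γ ∈ Λ.powerset, (if Γ = Λ' then c else 0) = c := by
        rw [Finset.sum_ite_eq' Λ.powerset Λ' (fun _ => c)]
        simp [Finset.mem_powerset.mpr hΛ'sub]
      have e2 : ∑ Γ ∈ Λ.powerset, (if Γ ⊆ Λ' then d' Γ else 0) = S' := by
        rw [← Finset.sum_filter, hfilter]
      rw [e1, e2]
      have hγm : γ ≤ |f m x| := hγle m hm
      have : β / |f m x| ≤ β / γ := by gcongr
      linarith
    · intro Γ hΓ hdΓ n hn k hk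
      by_cases hΓΛ' : Γ = Λ'
      · subst hΓΛ'; exact hg' n hn k hk
      · have hsub : Γ ⊆ Λ' ∧ d' Γ ≠ 0 := by
          by_cases hs : Γ ⊆ Λ'
          · refine ⟨hs, ?_⟩
            intro h0
            simp [hΓΛ', hs, h0] at hdΓ
          · simp [hΓΛ', hs] at hdΓ
        exact hd'g Γ (Finset.mem_powerset.mpr hsub.1) hsub.2 n hn k hk
    · -- the main identity
      have hPdiff : (∑ n ∈ Λ, f n x • e n) - ∑ n ∈ Λ', f n x • e n = f m x • e m := by
        rw [sub_eq_iff_eq_add, ← Finset.sum_erase_add Λ _ hm, add_comm]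
      have hsplit : ∑ n ∈ Λ, (β * ε n) • e n
          = (β * ε m) • e m + ∑ n ∈ Λ', (β * ε n) • e n := by
        rw [← Finset.sum_erase_add Λ _ hm, add_comm]
      rw [hsplit]
      have hRHS : ∑ Γ ∈ Λ.powerset,
            ((if Γ = Λ' then c else 0) + (if Γ ⊆ Λ' then d' Γ else 0)) •
              ((∑ n ∈ Λ, f n x • e n) - ∑ n ∈ Γ, f n x • e n)
          = c • ((∑ n ∈ Λ, f n x • e n) - ∑ n ∈ Λ', f n x • e n)
            + ∑ Γ ∈ Λ'.powerset, d' Γ •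
              ((∑ n ∈ Λ, f n x • e n) - ∑ n ∈ Γ, f n x • e n) := by
        simp only [add_smul, Finset.sum_add_distrib]
        congr 1
        · simp only [ite_smul, zero_smul]
          rw [Finset.sum_ite_eq' Λ.powerset Λ']
          simp [Finset.mem_powerset.mpr hΛ'sub]
        · simp only [ite_smul, zero_smul, ← Finset.sum_filter, hfilter]
      rw [hRHS]
      have hPsplit : ∀ Γ : Finset ℕ,
          (∑ n ∈ Λ, f n x • e n) - ∑ n ∈ Γ, f n x • e n
            = ((∑ n ∈ Λ, f n x • e n) - ∑ n ∈ Λ', f n x • e n)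
              + ((∑ n ∈ Λ', f n x • e n) - ∑ n ∈ Γ, f n x • e n) := by
        intro Γ; abel
      have hsum2 : ∑ Γ ∈ Λ'.powerset, d' Γ •
            ((∑ n ∈ Λ, f n x • e n) - ∑ n ∈ Γ, f n x • e n)
          = S' • ((∑ n ∈ Λ, f n x • e n) - ∑ n ∈ Λ', f n x • e n)
            + ∑ n ∈ Λ', (β * ε n) • e n := by
        rw [hd'eq, hS'def, Finset.sum_smul]
        rw [← Finset.sum_add_distrib]
        refine Finset.sum_congr rfl fun Γ _ => ?_
        rw [hPsplit Γ, smul_add]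
      rw [hsum2, ← add_assoc, ← add_smul, hPdiff]
      have hcS' : c + S' = β / |f m x| := by rw [hcdef]; ring
      rw [hcS', smul_smul]
      have hεm : ε m * |f m x| = f m x := hεp m hm
      have : β / |f m x| * f m x = β * ε m := by
        rw [div_mul_eq_mul_div, div_eq_iff (ne_of_gt ha)]; linear_combination (-β) * hεm
      rw [this]

/-- Lemma 2 of the paper: if `Λ` is a greedy set for `x` with `|Λ| = N`,
`α = min_{n∈Λ} |e_n^*(x)|`, `ε_n = sgn(e_n^*(x))`, and the nested greedy truncation
bound holds with constant `C`, then `α·‖∑_{n∈Λ} ε_n e_n‖ ≤ C·‖x‖`. -/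
theorem stmt_18 {X : Type*} [NormedAddCommGroup X] [NormedSpace ℝ X] [CompleteSpace X]
    (e : ℕ → X) (f : ℕ → X →L[ℝ] ℝ)
    (hbi : ∀ m n, f m (e n) = if m = n then 1 else 0)
    (x : X) (N : ℕ) (Λ : Finset ℕ) (hΛne : Λ.Nonempty) (hΛcard : Λ.card = N)
    (hΛ : ∀ n ∈ Λ, ∀ m ∉ Λ, |f m x| ≤ |f n x|)
    (α : ℝ) (hα : α = Λ.inf' hΛne fun n => |f n x|)
    (ε : ℕ → ℝ) (hε : ∀ n ∈ Λ, ε n = if f n x = 0 then 1 else f n x / |f n x|)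
    (C : ℝ)
    (hC : ∀ Γ Γ' : Finset ℕ, Γ' ⊆ Γ → Γ.card ≤ N →
      (∀ n ∈ Γ, ∀ m ∉ Γ, |f m x| ≤ |f n x|) →
      (∀ n ∈ Γ', ∀ m ∉ Γ', |f m x| ≤ |f n x|) →
      ‖(∑ n ∈ Γ, f n x • e n) - ∑ n ∈ Γ', f n x • e n‖ ≤ C * ‖x‖) :
    α * ‖∑ n ∈ Λ, ε n • e n‖ ≤ C * ‖x‖ := by
  have hCx : 0 ≤ C * ‖x‖ := by
    have := hC Λ Λ (subset_refl Λ) (le_of_eq hΛcard) hΛ hΛ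
    simpa using this
  have hαle : ∀ n ∈ Λ, α ≤ |f n x| := by
    intro n hn; rw [hα]; exact Finset.inf'_le _ hn
  have hα0 : 0 ≤ α := by
    rw [hα]
    exact Finset.le_inf' hΛne _ fun n _ => abs_nonneg _
  rcases eq_or_lt_of_le hα0 with hα0' | hαpos
  · rw [← hα0', zero_mul]; exact hCx
  -- α > 0, so f n x ≠ 0 for n ∈ Λ
  have hεp : ∀ n ∈ Λ, ε n * |f n x| = f n x := by
    intro n hn
    have hfn : f n x ≠ 0 := by
      intro h0
      have := hαle n hn
      rw [h0] at this
      simp at this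
      linarith
    rw [hε n hn, if_neg hfn]
    field_simp
  obtain ⟨d, hd0, hdsum, hdg, hdeq⟩ :=
    stmt_18_aux e f x ε Λ hΛ α hα0 hαle hεp
  have hsum1 : ∑ Γ ∈ Λ.powerset, d Γ ≤ 1 := by
    have := hdsum α hαpos hαle
    rwa [div_self (ne_of_gt hαpos)] at this
  have hLHS : ∑ n ∈ Λ, (α * ε n) • e n = α • ∑ n ∈ Λ, ε n • e n := by
    rw [Finset.smul_sum]
    exact Finset.sum_congr rfl fun n _ => by rw [smul_smul]
  calc α * ‖∑ n ∈ Λ, ε n • e n‖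
      = ‖α • ∑ n ∈ Λ, ε n • e n‖ := by
        rw [norm_smul, Real.norm_eq_abs, abs_of_nonneg hα0]
    _ = ‖∑ Γ ∈ Λ.powerset, d Γ • ((∑ n ∈ Λ, f n x • e n) - ∑ n ∈ Γ, f n x • e n)‖ := by
        rw [← hLHS, hdeq]
    _ ≤ ∑ Γ ∈ Λ.powerset, ‖d Γ • ((∑ n ∈ Λ, f n x • e n) - ∑ n ∈ Γ, f n x • e n)‖ :=
        norm_sum_le _ _
    _ ≤ ∑ Γ ∈ Λ.powerset, d Γ * (C * ‖x‖) := by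
        refine Finset.sum_le_sum fun Γ hΓ => ?_
        rw [norm_smul, Real.norm_eq_abs, abs_of_nonneg (hd0 Γ)]
        rcases eq_or_ne (d Γ) 0 with h0 | h0
        · simp [h0]
        · refine mul_le_mul_of_nonneg_left ?_ (hd0 Γ)
          exact hC Λ Γ (Finset.mem_powerset.mp hΓ) (le_of_eq hΛcard) hΛ
            (hdg Γ hΓ h0)
    _ = (∑ Γ ∈ Λ.powerset, d Γ) * (C * ‖x‖) := by rw [Finset.sum_mul]
    _ ≤ 1 * (C * ‖x‖) := mul_le_mul_of_nonneg_right hsum1 hCx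
    _ = C * ‖x‖ := one_mul _
end

section
/- (Truncation operator bounds) Let X be a Banach space with biorthogonal system, α > 0, x ∈ X with Λ_α = {n : |e_n^*(x)| > α} finite, and define T_α x = ∑_{n∈Λ_α} α·sgn(e_n^*(x)) e_n + (x − P_{Λ_α} x). If ‖x − P_Γ x‖ ≤ g^c‖x‖ for every greedy set Γ of x with |Γ| ≤ |Λ_α|, then ‖T_α x‖ ≤ g^c‖x‖; and if ‖P_Γ x‖ ≤ g‖x‖ for every such greedy set, then ‖x − T_α x‖ ≤ g‖x‖. -/
/-!
For `0 < s ≤ 1` the coefficients of `x` above the level `α / s` form a greedy set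
`Λ_{α,s} ⊆ Λ_α`, and the coefficient `a n` of `n ∈ Λ_α` belongs to it exactly for
`s > α / |a n|`. Integrating over `s ∈ (0, 1]` therefore gives
`∫₀¹ P_{Λ_{α,s}} x ds = ∑_{n ∈ Λ_α} (1 - α / |a n|) a n e_n = x - T_α x`,
so `x - T_α x` and `T_α x = ∫₀¹ (x - P_{Λ_{α,s}} x) ds` are averages of greedy
projections and greedy remainders, and the bounds pass to them by the triangle inequality
for integrals.
-/

open MeasureTheory Set intervalIntegral

def IsGreedySet (a : ℕ → ℝ) (Γ : Finset ℕ) : Prop :=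
  ∀ n ∈ Γ, ∀ m ∉ Γ, |a m| ≤ |a n|

lemma isGreedySet_of_mem_iff {a : ℕ → ℝ} {Γ : Finset ℕ} {t : ℝ}
    (hΓ : ∀ n, n ∈ Γ ↔ t < |a n|) : IsGreedySet a Γ := fun n hn m hm =>
  (le_of_not_gt fun h => hm ((hΓ m).2 h)).trans ((hΓ n).1 hn).le

lemma norm_integral_zero_one_le {E : Type*} [NormedAddCommGroup E] [NormedSpace ℝ E]
    {F : ℝ → E} {C : ℝ} (h : ∀ s ∈ Ioc (0 : ℝ) 1, ‖F s‖ ≤ C) :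
    ‖∫ s in (0 : ℝ)..1, F s‖ ≤ C := by
  have hC := norm_integral_le_of_norm_le_const (by rwa [uIoc_of_le zero_le_one])
  rwa [sub_zero, abs_one, mul_one] at hC

lemma intervalIntegrable_indicator_Ioi_const {E : Type*} [NormedAddCommGroup E] (c : ℝ)
    (v : E) : IntervalIntegrable (fun s => (Ioi c).indicator (fun _ => v) s) volume 0 1 :=
  (intervalIntegrable_iff_integrableOn_Ioc_of_le zero_le_one).2
    ((integrableOn_const measure_Ioc_lt_top.ne).indicator measurableSet_Ioi)

lemma integral_zero_one_indicator_Ioi_const {E : Type*} [NormedAddCommGroup E]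
    [NormedSpace ℝ E] [CompleteSpace E] {c : ℝ} (hc₀ : 0 ≤ c) (hc₁ : c ≤ 1) (v : E) :
    ∫ s in (0 : ℝ)..1, (Ioi c).indicator (fun _ => v) s = (1 - c) • v := by
  rw [integral_of_le zero_le_one, setIntegral_indicator measurableSet_Ioi, Ioc_inter_Ioi,
    max_eq_right hc₀,
    setIntegral_const, Real.volume_real_Ioc_of_le hc₁]

section LevelSetProjection

variable {X : Type*} [NormedAddCommGroup X] [NormedSpace ℝ X]
  (e : ℕ → X) (a : ℕ → ℝ) (α : ℝ) (Λ : Finset ℕ)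

/-- The paper's `P_{Λ_{α,s}} x` for `0 < s ≤ 1`, as a step function of `s`; only indices in
`Λ = Λ_α` can lie in `Λ_{α,s}`. -/
noncomputable def levelSetProj (s : ℝ) : X :=
  ∑ n ∈ Λ, (Ioi (α / |a n|)).indicator (fun _ => a n • e n) s

lemma levelSetProj_eq_sum_filter (s : ℝ) :
    levelSetProj e a α Λ s = ∑ n ∈ Λ.filter (fun n => α / |a n| < s), a n • e n := by
  rw [levelSetProj, Finset.sum_filter]
  exact Finset.sum_congr rfl fun n _ => indicator_apply _ _ _

lemma intervalIntegrable_levelSetProj :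
    IntervalIntegrable (levelSetProj e a α Λ) volume 0 1 := by
  have hsum : levelSetProj e a α Λ
      = ∑ n ∈ Λ, fun s => (Ioi (α / |a n|)).indicator (fun _ => a n • e n) s := by
    ext s
    rw [levelSetProj, Finset.sum_apply]
  rw [hsum]
  exact IntervalIntegrable.sum Λ fun n _ => intervalIntegrable_indicator_Ioi_const _ _

variable {e a α Λ}

lemma integral_levelSetProj [CompleteSpace X] (hα : 0 < α) (hΛ : ∀ n ∈ Λ, α < |a n|) :
    ∫ s in (0 : ℝ)..1, levelSetProj e a α Λ s
      = ∑ n ∈ Λ, (a n - α * (a n / |a n|)) • e n := by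
  unfold levelSetProj
  rw [integral_finsetSum fun n _ => intervalIntegrable_indicator_Ioi_const _ _]
  refine Finset.sum_congr rfl fun n hn => ?_
  have habs : 0 < |a n| := hα.trans (hΛ n hn)
  rw [integral_zero_one_indicator_Ioi_const (div_pos hα habs).le
    ((div_le_one habs).2 (hΛ n hn).le), smul_smul]
  congr 1
  field_simp

lemma mem_filter_iff_div_lt_abs (hα : 0 < α) (hΛ : ∀ n, n ∈ Λ ↔ α < |a n|)
    {s : ℝ} (hs : s ∈ Ioc (0 : ℝ) 1) (n : ℕ) :
    n ∈ Λ.filter (fun n => α / |a n| < s) ↔ α / s < |a n| := by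
  obtain ⟨hs₀, hs₁⟩ := hs
  rw [Finset.mem_filter, hΛ, div_lt_iff₀ hs₀]
  constructor
  · rintro ⟨hαn, hlt⟩
    rwa [div_lt_iff₀ (hα.trans hαn), mul_comm] at hlt
  · intro hlt
    have hαn : α < |a n| := by nlinarith [abs_nonneg (a n)]
    refine ⟨hαn, ?_⟩
    rwa [div_lt_iff₀ (hα.trans hαn), mul_comm]

lemma forall_levelSetProj_of_forall_isGreedySet (hα : 0 < α)
    (hΛ : ∀ n, n ∈ Λ ↔ α < |a n|) {P : X → Prop}
    (hP : ∀ Γ : Finset ℕ, Γ.card ≤ Λ.card → IsGreedySet a Γ → P (∑ n ∈ Γ, a n • e n)) :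
    ∀ s ∈ Ioc (0 : ℝ) 1, P (levelSetProj e a α Λ s) := fun s hs => by
  rw [levelSetProj_eq_sum_filter]
  exact hP _ (Finset.card_filter_le _ _)
    (isGreedySet_of_mem_iff (mem_filter_iff_div_lt_abs hα hΛ hs))

end LevelSetProjection

theorem stmt_19_general {X : Type*} [NormedAddCommGroup X] [NormedSpace ℝ X] [CompleteSpace X]
    (e : ℕ → X) (f : ℕ → X →L[ℝ] ℝ)
    (α : ℝ) (hα : 0 < α) (x : X) (Λα : Finset ℕ)
    (hΛα : ∀ n, n ∈ Λα ↔ α < |f n x|)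
    (T : X)
    (hT : T = (∑ n ∈ Λα, (α * (f n x / |f n x|)) • e n)
        + (x - ∑ n ∈ Λα, f n x • e n))
    (g gc : ℝ) :
    ((∀ Γ : Finset ℕ, Γ.card ≤ Λα.card →
        (∀ n ∈ Γ, ∀ m ∉ Γ, |f m x| ≤ |f n x|) →
        ‖x - ∑ n ∈ Γ, f n x • e n‖ ≤ gc * ‖x‖) → ‖T‖ ≤ gc * ‖x‖) ∧
    ((∀ Γ : Finset ℕ, Γ.card ≤ Λα.card →
        (∀ n ∈ Γ, ∀ m ∉ Γ, |f m x| ≤ |f n x|) →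
        ‖∑ n ∈ Γ, f n x • e n‖ ≤ g * ‖x‖) → ‖x - T‖ ≤ g * ‖x‖) := by
  set G := levelSetProj e (fun n => f n x) α Λα
  have hsub_eq : x - T = ∫ s in (0 : ℝ)..1, G s := by
    rw [integral_levelSetProj hα fun n hn => (hΛα n).1 hn, hT]
    simp only [sub_smul, Finset.sum_sub_distrib]
    abel
  have hT_eq : T = ∫ s in (0 : ℝ)..1, (x - G s) := by
    rw [integral_sub intervalIntegrable_const (intervalIntegrable_levelSetProj _ _ _ _),
      intervalIntegral.integral_const, ← hsub_eq]
    simp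
  refine ⟨fun H => ?_, fun H => ?_⟩
  · rw [hT_eq]
    exact norm_integral_zero_one_le
      (forall_levelSetProj_of_forall_isGreedySet (P := fun y => ‖x - y‖ ≤ gc * ‖x‖) hα hΛα H)
  · rw [hsub_eq]
    exact norm_integral_zero_one_le
      (forall_levelSetProj_of_forall_isGreedySet (P := fun y => ‖y‖ ≤ g * ‖x‖) hα hΛα H)

/-- Lemma 3 of the paper: for `α > 0` with `Λ_α = {n : |e_n^*(x)| > α}` finite and the
truncation `T_α x = ∑_{n∈Λ_α} α·sgn(e_n^*(x)) e_n + (x - P_{Λ_α} x)`: if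
`‖x - P_Γ x‖ ≤ g^c‖x‖` for every greedy set `Γ` of `x` with `|Γ| ≤ |Λ_α|` then
`‖T_α x‖ ≤ g^c‖x‖`; and if `‖P_Γ x‖ ≤ g‖x‖` for every such greedy set then
`‖x - T_α x‖ ≤ g‖x‖`. -/
theorem stmt_19 {X : Type*} [NormedAddCommGroup X] [NormedSpace ℝ X] [CompleteSpace X]
    (e : ℕ → X) (f : ℕ → X →L[ℝ] ℝ)
    (hbi : ∀ m n, f m (e n) = if m = n then 1 else 0)
    (α : ℝ) (hα : 0 < α) (x : X) (Λα : Finset ℕ)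
    (hΛα : ∀ n, n ∈ Λα ↔ α < |f n x|)
    (T : X)
    (hT : T = (∑ n ∈ Λα, (α * (f n x / |f n x|)) • e n)
        + (x - ∑ n ∈ Λα, f n x • e n))
    (g gc : ℝ) :
    ((∀ Γ : Finset ℕ, Γ.card ≤ Λα.card →
        (∀ n ∈ Γ, ∀ m ∉ Γ, |f m x| ≤ |f n x|) →
        ‖x - ∑ n ∈ Γ, f n x • e n‖ ≤ gc * ‖x‖) → ‖T‖ ≤ gc * ‖x‖) ∧
    ((∀ Γ : Finset ℕ, Γ.card ≤ Λα.card →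
        (∀ n ∈ Γ, ∀ m ∉ Γ, |f m x| ≤ |f n x|) →
        ‖∑ n ∈ Γ, f n x • e n‖ ≤ g * ‖x‖) → ‖x - T‖ ≤ g * ‖x‖) :=
  stmt_19_general e f α hα x Λα hΛα T hT g gc
end
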